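/- Let n ≥ 1 be an integer, M > 0, and δ ∈ (0,1). Let y, y' ∈ ℝⁿ differ in at most one coordinate, with |y_k| ≤ M and |y'_k| ≤ M for all k, and with |(1/n)·Σ_{k=1}^n y_k| ≤ 1−δ and |(1/n)·Σ_{k=1}^n y'_k| ≤ 1−δ. Then |Fis((1/n)·Σ_{k=1}^n y_k) − Fis((1/n)·Σ_{k=1}^n y'_k)| ≤ 2M/(n·δ·(2−δ)). -/

import Mathlib

/-- Fisher's Z transformation. -/
noncomputable def Fis (x : ℝ) : ℝ := Real.log ((1 + x) / (1 - x)) / 2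

/-! The derivative of `Fis` is `1 / (1 - x²)`, which is at most `1 / (1 - (1 - δ)²) = 1 / (δ (2 - δ))`
on `[-(1 - δ), 1 - δ]`, so by the mean value theorem `Fis` is Lipschitz there with that constant.
The two sample means differ by `|y k₀ - y' k₀| / n ≤ 2M / n`. -/

open Set

lemma hasDerivAt_fis {x : ℝ} (hx : |x| < 1) : HasDerivAt Fis (1 / (1 - x ^ 2)) x := by
  obtain ⟨hl, hr⟩ := abs_lt.mp hx
  have h1 : 1 + x ≠ 0 := by linarith
  have h2 : 1 - x ≠ 0 := by linarith
  have hquot : HasDerivAt (fun x : ℝ => (1 + x) / (1 - x)) (2 / (1 - x) ^ 2) x :=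
    (((hasDerivAt_id' x).const_add 1).div ((hasDerivAt_id' x).const_sub 1) h2).congr_deriv
      (by ring)
  have hpos : 0 < (1 + x) / (1 - x) := div_pos (by linarith) (by linarith)
  refine ((hquot.log hpos.ne').div_const 2).congr_deriv ?_
  have h3 : 1 - x ^ 2 ≠ 0 := by nlinarith
  field_simp
  ring

lemma abs_fis_sub_le {r a b : ℝ} (hr : r < 1) (ha : |a| ≤ r) (hb : |b| ≤ r) :
    |Fis a - Fis b| ≤ |a - b| / (1 - r ^ 2) := by
  have hr0 : 0 ≤ r := (abs_nonneg a).trans ha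
  have hderiv : ∀ x ∈ Icc (-r) r, HasDerivWithinAt Fis (1 / (1 - x ^ 2)) (Icc (-r) r) x :=
    fun x hx => (hasDerivAt_fis ((abs_le.mpr hx).trans_lt hr)).hasDerivWithinAt
  have hbound : ∀ x ∈ Icc (-r) r, ‖1 / (1 - x ^ 2)‖ ≤ 1 / (1 - r ^ 2) := by
    intro x hx
    have hsq : x ^ 2 ≤ r ^ 2 := sq_le_sq' hx.1 hx.2
    have hpos : 0 < 1 - r ^ 2 := by nlinarith
    rw [Real.norm_eq_abs, abs_of_pos (one_div_pos.mpr (by linarith))]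
    exact one_div_le_one_div_of_le hpos (by linarith)
  have := (convex_Icc (-r) r).norm_image_sub_le_of_norm_hasDerivWithin_le hderiv hbound
    (abs_le.mp hb) (abs_le.mp ha)
  simpa only [Real.norm_eq_abs, one_div_mul_eq_div] using this

lemma sum_sub_sum_eq_of_eq_off {ι : Type*} [Fintype ι] {y y' : ι → ℝ} {k₀ : ι}
    (hdiff : ∀ k, k ≠ k₀ → y k = y' k) : ∑ k, y k - ∑ k, y' k = y k₀ - y' k₀ := by
  rw [← Finset.sum_sub_distrib]
  exact Fintype.sum_eq_single k₀ fun k hk => by rw [hdiff k hk, sub_self]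

theorem stmt8_general (n : ℕ) (M δ : ℝ) (hδ0 : 0 < δ)
    (y y' : Fin n → ℝ) (k₀ : Fin n) (hdiff : ∀ k, k ≠ k₀ → y k = y' k)
    (hy : ∀ k, |y k| ≤ M) (hy' : ∀ k, |y' k| ≤ M)
    (hmean : |(1 / (n : ℝ)) * ∑ k, y k| ≤ 1 - δ)
    (hmean' : |(1 / (n : ℝ)) * ∑ k, y' k| ≤ 1 - δ) :
    |Fis ((1 / (n : ℝ)) * ∑ k, y k) - Fis ((1 / (n : ℝ)) * ∑ k, y' k)| ≤
      2 * M / (n * δ * (2 - δ)) := by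
  have hδ1 : δ ≤ 1 := by linarith [abs_nonneg ((1 / (n : ℝ)) * ∑ k, y k)]
  have hmeans : |(1 / (n : ℝ)) * ∑ k, y k - (1 / (n : ℝ)) * ∑ k, y' k| ≤ 2 * M / n := by
    rw [← mul_sub, sum_sub_sum_eq_of_eq_off hdiff, abs_mul, abs_one_div, Nat.abs_cast,
      one_div_mul_eq_div]
    gcongr
    linarith [abs_sub (y k₀) (y' k₀), hy k₀, hy' k₀]
  calc _ ≤ _ / (1 - (1 - δ) ^ 2) := abs_fis_sub_le (by linarith) hmean hmean'
    _ ≤ 2 * M / n / (δ * (2 - δ)) := by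
        rw [show 1 - (1 - δ) ^ 2 = δ * (2 - δ) by ring]
        gcongr
        nlinarith
    _ = 2 * M / (n * δ * (2 - δ)) := by rw [div_div, mul_assoc]

/-- Bounded-differences estimate for the Fisher's Z transformed sample mean:
changing a single bounded data point changes `Fis` of the mean by at most
`2M/(n·δ·(2−δ))`, provided both means lie in `[-(1-δ), 1-δ]`. -/
theorem stmt8 (n : ℕ) (hn : 1 ≤ n) (M δ : ℝ) (hM : 0 < M) (hδ0 : 0 < δ) (hδ1 : δ < 1)
    (y y' : Fin n → ℝ) (k₀ : Fin n) (hdiff : ∀ k, k ≠ k₀ → y k = y' k)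
    (hy : ∀ k, |y k| ≤ M) (hy' : ∀ k, |y' k| ≤ M)
    (hmean : |(1 / (n : ℝ)) * ∑ k, y k| ≤ 1 - δ)
    (hmean' : |(1 / (n : ℝ)) * ∑ k, y' k| ≤ 1 - δ) :
    |Fis ((1 / (n : ℝ)) * ∑ k, y k) - Fis ((1 / (n : ℝ)) * ∑ k, y' k)| ≤
      2 * M / (n * δ * (2 - δ)) :=
  stmt8_general n M δ hδ0 y y' k₀ hdiff hy hy' hmean hmean'
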